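/- Let T : ℝ₊^N → ℝ₊₊^N be a positive concave mapping whose lower bounding matrix M satisfies ρ(M) < 1, and assume there exists y ∈ ℝ₊₊^N such that T(x) ≤ y + M·x componentwise for every x ∈ ℝ₊^N. Then T has a fixed point: there exists x* ∈ ℝ₊₊^N with T(x*) = x*. -/

import Mathlib

open Matrix Filter Topology

noncomputable section

/-- `g` is a supergradient of `f` at `x`: the supergradient inequality holds for all
points `y` in the nonnegative orthant. -/
def IsSupergrad {N : ℕ} (f : (Fin N → ℝ) → ℝ) (x g : Fin N → ℝ) : Prop :=
  ∀ y : Fin N → ℝ, 0 ≤ y → f y ≤ f x + ∑ i, g i * (y i - x i)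

/-- `M` is the lower bounding matrix of the positive concave mapping with components `f i`:
`M i k` is the infimum of the `k`-th components of all supergradients of `f i` at points of
the nonnegative orthant. -/
def IsLBM {N : ℕ} (f : Fin N → (Fin N → ℝ) → ℝ) (M : Matrix (Fin N) (Fin N) ℝ) : Prop :=
  ∀ i k, M i k =
    sInf {t : ℝ | ∃ x : Fin N → ℝ, 0 ≤ x ∧ ∃ g : Fin N → ℝ, IsSupergrad (f i) x g ∧ g k = t}

/-- The spectral radius of a real matrix: the supremum of the moduli of its complex
eigenvalues. -/
def specRad {N : ℕ} (M : Matrix (Fin N) (Fin N) ℝ) : ENNReal :=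
  spectralRadius ℂ (M.map (algebraMap ℝ ℂ))

/-!
Supergradients of a positive function on the orthant are nonnegative, so `M ≥ 0`, and a positive
concave function on the orthant is nondecreasing, so `T` is monotone. Since `ρ(M) < 1`, the
Neumann series `u = ∑ Mⁿ y` converges and solves `u = y + M u`, whence `T u ≤ y + M u = u`.
As `T` maps the orthant into itself, the infimum of `{x ≥ 0 | T x ≤ x}` is a fixed point
(Knaster–Tarski), and it is positive because `T` is.
-/

open Set Function

theorem exists_isFixedPt_of_monotoneOn_Ici {α : Type*} [ConditionallyCompleteLattice α]
    {T : α → α} {a u : α} (hT : MonotoneOn T (Ici a)) (hmaps : MapsTo T (Ici a) (Ici a))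
    (hu : a ≤ u) (hTu : T u ≤ u) : ∃ x, a ≤ x ∧ IsFixedPt T x := by
  set S := {x | a ≤ x ∧ T x ≤ x}
  have hne : S.Nonempty := ⟨u, hu, hTu⟩
  have hbdd : BddBelow S := ⟨a, fun x hx => hx.1⟩
  have hax : a ≤ sInf S := le_csInf hne fun x hx => hx.1
  have hTx : T (sInf S) ≤ sInf S := le_csInf hne fun x hx =>
    (hT hax hx.1 (csInf_le hbdd hx)).trans hx.2
  have hTxS : T (sInf S) ∈ S := ⟨hmaps hax, hT (hmaps hax) hax hTx⟩
  exact ⟨sInf S, hax, le_antisymm hTx (csInf_le hbdd hTxS)⟩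

theorem ConcaveOn.monotoneOn_of_pos {E : Type*} [AddCommGroup E] [PartialOrder E]
    [IsOrderedAddMonoid E] [Module ℝ E] [PosSMulMono ℝ E] {f : E → ℝ}
    (hf : ConcaveOn ℝ (Ici 0) f) (hpos : ∀ x, 0 ≤ x → 0 < f x) : MonotoneOn f (Ici 0) := by
  intro a (ha : 0 ≤ a) b (hb : 0 ≤ b) hab
  by_contra! hlt
  have hfa := hpos a ha
  -- With `t` chosen so that `(1 - t) f a = f b`, concavity on the segment from `a` to `z`
  -- forces `t f z ≤ 0`.
  set t := (f a - f b) / f a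
  have ht : 0 < t := div_pos (by linarith) hfa
  have ht1 : t ≤ 1 := (div_le_one hfa).mpr (by linarith [hpos b hb])
  set z := a + t⁻¹ • (b - a)
  have hz : 0 ≤ z := add_nonneg ha (smul_nonneg (inv_nonneg.mpr ht.le) (sub_nonneg.mpr hab))
  have hb_eq : (1 - t) • a + t • z = b := by
    simp only [z, smul_add, smul_smul, mul_inv_cancel₀ ht.ne', one_smul]; module
  have hconc : (1 - t) * f a + t * f z ≤ f b := by
    simpa only [hb_eq, smul_eq_mul] using
      hf.2 (show a ∈ Ici 0 from ha) (show z ∈ Ici 0 from hz) (sub_nonneg.mpr ht1) ht.le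
        (sub_add_cancel 1 t)
  have hfb : (1 - t) * f a = f b := by simp only [t]; field_simp; ring
  nlinarith [hpos z hz]

theorem IsSupergrad.nonneg {N : ℕ} {f : (Fin N → ℝ) → ℝ} {x g : Fin N → ℝ}
    (hg : IsSupergrad f x g) (hpos : ∀ y, 0 ≤ y → 0 < f y) (hx : 0 ≤ x) (k : Fin N) :
    0 ≤ g k := by
  by_contra! hgk
  set y := x + Pi.single k (f x / -g k)
  have hy : 0 ≤ y :=
    add_nonneg hx (Pi.single_nonneg.mpr (div_nonneg (hpos x hx).le (by linarith)))
  have hstep : ∑ i, g i * (y i - x i) = -f x := by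
    simp only [y, Pi.add_apply, add_sub_cancel_left, Pi.single_apply, mul_ite, mul_zero,
      Finset.sum_ite_eq', Finset.mem_univ, if_true]
    field_simp [hgk.ne]
  linarith [hg y hy, hpos y hy]

theorem IsLBM.nonneg {N : ℕ} {f : Fin N → (Fin N → ℝ) → ℝ} {M : Matrix (Fin N) (Fin N) ℝ}
    (hM : IsLBM f M) (hpos : ∀ i y, 0 ≤ y → 0 < f i y) (i k : Fin N) : 0 ≤ M i k := by
  rw [hM i k]
  exact Real.sInf_nonneg fun _ ⟨x, hx, g, hg, hgk⟩ => hgk ▸ hg.nonneg (hpos i) hx k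

theorem summable_norm_pow_of_spectralRadius_lt_one {A : Type*} [NormedRing A]
    [NormedAlgebra ℂ A] [CompleteSpace A] {a : A} (h : spectralRadius ℂ a < 1) :
    Summable (‖a ^ ·‖) := by
  obtain ⟨r, hr, hr1⟩ := ENNReal.lt_iff_exists_nnreal_btwn.mp h
  have hbound : ∀ᶠ n : ℕ in atTop, ‖‖a ^ n‖‖ ≤ (r : ℝ) ^ n := by
    have hgelfand := spectrum.pow_nnnorm_pow_one_div_tendsto_nhds_spectralRadius a
    filter_upwards [hgelfand.eventually_lt_const hr, eventually_gt_atTop 0] with n hn hn0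
    rw [one_div, ENNReal.rpow_inv_lt_iff (by positivity), ENNReal.rpow_natCast,
      ← ENNReal.coe_pow, ENNReal.coe_lt_coe] at hn
    rw [norm_norm, ← coe_nnnorm]
    exact_mod_cast hn.le
  exact .of_norm_bounded_eventually_nat
    (summable_geometric_of_lt_one r.coe_nonneg (by exact_mod_cast hr1)) hbound

section LinftyOpNorm

attribute [local instance] Matrix.linftyOpNormedAddCommGroup Matrix.linftyOpNormedRing
  Matrix.linftyOpNormedAlgebra

theorem Matrix.linfty_opNNNorm_map_ofReal {m n : Type*} [Fintype m] [Fintype n]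
    (B : Matrix m n ℝ) : ‖B.map (algebraMap ℝ ℂ)‖₊ = ‖B‖₊ := by
  simp [Matrix.linfty_opNNNorm_def]

theorem summable_pow_of_specRad_lt_one {N : ℕ} {M : Matrix (Fin N) (Fin N) ℝ}
    (h : specRad M < 1) : Summable (M ^ ·) := by
  refine .of_norm ((summable_norm_pow_of_spectralRadius_lt_one h).congr fun n => ?_)
  rw [← Matrix.map_pow M (algebraMap ℝ ℂ), ← coe_nnnorm, ← coe_nnnorm,
    Matrix.linfty_opNNNorm_map_ofReal]

end LinftyOpNorm

theorem exists_nonneg_eq_add_mulVec_of_specRad_lt_one {N : ℕ} {M : Matrix (Fin N) (Fin N) ℝ}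
    (hM : ∀ i k, 0 ≤ M i k) (h : specRad M < 1) {y : Fin N → ℝ} (hy : 0 ≤ y) :
    ∃ u, 0 ≤ u ∧ y + M *ᵥ u = u := by
  have hsum := summable_pow_of_specRad_lt_one h
  set S := ∑' n, M ^ n
  have hS : S = 1 + M * S := by
    have := hsum.one_sub_mul_tsum_pow
    rwa [sub_mul, one_mul, sub_eq_iff_eq_add] at this
  have hS_nonneg : ∀ i k, 0 ≤ S i k := fun i k =>
    (Pi.hasSum.mp (Pi.hasSum.mp hsum.hasSum i) k).nonneg fun n => Matrix.pow_apply_nonneg hM n i k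
  refine ⟨S *ᵥ y, fun i => ?_, ?_⟩
  · rw [Matrix.mulVec_apply_eq_sum]
    exact Finset.sum_nonneg fun k _ => mul_nonneg (hS_nonneg i k) (hy k)
  · conv_rhs => rw [hS]
    rw [Matrix.add_mulVec, Matrix.one_mulVec, Matrix.mulVec_mulVec]

theorem fixed_point_of_specRad_lt_one_and_affine_majorant_general {N : ℕ}
    (f : Fin N → (Fin N → ℝ) → ℝ)
    (hconc : ∀ i, ConcaveOn ℝ {x : Fin N → ℝ | 0 ≤ x} (f i))
    (hpos : ∀ i, ∀ x : Fin N → ℝ, 0 ≤ x → 0 < f i x)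
    (M : Matrix (Fin N) (Fin N) ℝ) (hM : IsLBM f M)
    (hrad : specRad M < 1)
    (hub : ∃ y : Fin N → ℝ, (∀ i, 0 < y i) ∧
      ∀ x : Fin N → ℝ, 0 ≤ x → ∀ i, f i x ≤ y i + (M *ᵥ x) i) :
    ∃ xstar : Fin N → ℝ, (∀ i, 0 < xstar i) ∧ (fun i => f i xstar) = xstar := by
  obtain ⟨y, hy, hub⟩ := hub
  obtain ⟨u, hu, hu_eq⟩ := exists_nonneg_eq_add_mulVec_of_specRad_lt_one (hM.nonneg hpos) hrad
    fun i => (hy i).le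
  set T : (Fin N → ℝ) → Fin N → ℝ := fun x i => f i x
  have hT_mono : MonotoneOn T (Ici 0) := fun a ha b hb hab i =>
    (hconc i).monotoneOn_of_pos (hpos i) ha hb hab
  have hT_maps : MapsTo T (Ici 0) (Ici 0) := fun x hx i => (hpos i x hx).le
  have hTu : T u ≤ u := fun i => (hub u hu i).trans_eq (congrFun hu_eq i)
  obtain ⟨x, hx, hTx⟩ := exists_isFixedPt_of_monotoneOn_Ici hT_mono hT_maps hu hTu
  exact ⟨x, fun i => (hpos i x hx).trans_eq (congrFun hTx i), hTx⟩

/-- If the lower bounding matrix has spectral radius < 1 and the mapping is dominated by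
the affine mapping x ↦ y + Mx for some strictly positive y, then a fixed point exists. -/
theorem fixed_point_of_specRad_lt_one_and_affine_majorant {N : ℕ}
    (f : Fin N → (Fin N → ℝ) → ℝ)
    (hconc : ∀ i, ConcaveOn ℝ {x : Fin N → ℝ | 0 ≤ x} (f i))
    (husc : ∀ i, UpperSemicontinuousOn (f i) {x : Fin N → ℝ | 0 ≤ x})
    (hpos : ∀ i, ∀ x : Fin N → ℝ, 0 ≤ x → 0 < f i x)
    (M : Matrix (Fin N) (Fin N) ℝ) (hM : IsLBM f M)
    (hrad : specRad M < 1)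
    (hub : ∃ y : Fin N → ℝ, (∀ i, 0 < y i) ∧
      ∀ x : Fin N → ℝ, 0 ≤ x → ∀ i, f i x ≤ y i + (M *ᵥ x) i) :
    ∃ xstar : Fin N → ℝ, (∀ i, 0 < xstar i) ∧ (fun i => f i xstar) = xstar :=
  fixed_point_of_specRad_lt_one_and_affine_majorant_general f hconc hpos M hM hrad hub
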